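/- arXiv:2303.15556 — 2 statements merged into one kernel-verified Lean document; each statement's English description precedes it below -/
import Mathlib

section
/- Let G be a finite graph, let the species set be {A, B}, and let the only reaction rule be A + A → B + B. Then a configuration T is reachable from a configuration I if and only if (1) every cell holding B in I also holds B in T, and (2) the induced subgraph of G on the set of 'flip' cells {v : I(v) = A and T(v) = B} has a perfect matching. -/
/-- One application of a reaction rule `(a, b, c, d)` (meaning `a + b → c + d`) from the
rule set `R` on an ordered pair of adjacent cells of the surface `G`. -/
def Step {V S : Type*} [DecidableEq V] (G : SimpleGraph V) (R : Set (S × S × S × S))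
    (I T : V → S) : Prop :=
  ∃ u v r, r ∈ R ∧ G.Adj u v ∧ I u = r.1 ∧ I v = r.2.1 ∧
    T = Function.update (Function.update I u r.2.2.1) v r.2.2.2

/-- `T` is reachable from `I` by a finite sequence of rule applications. -/
def Reaches {V S : Type*} [DecidableEq V] (G : SimpleGraph V) (R : Set (S × S × S × S))
    (I T : V → S) : Prop :=
  Relation.ReflTransGen (Step G R) I T

/-- Species set {A, B}. -/
inductive Species : Type
  | A | B
  deriving DecidableEq

lemma species_ne_B {s : Species} : s ≠ Species.B ↔ s = Species.A := by cases s <;> simp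
lemma species_ne_A {s : Species} : s ≠ Species.A ↔ s = Species.B := by cases s <;> simp

/-- flip set -/
def flipSet {V : Type*} (I T : V → Species) : Set V := {v | I v = Species.A ∧ T v = Species.B}

lemma key_fwd {V : Type*} [Fintype V] [DecidableEq V] (G : SimpleGraph V)
    (I T : V → Species)
    (h : Reaches G {(Species.A, Species.A, Species.B, Species.B)} I T) :
    (∀ v, I v = Species.B → T v = Species.B) ∧
      ∃ M : G.Subgraph, M.IsMatching ∧ M.verts = flipSet I T := by
  induction h with
  | refl =>
    refine ⟨fun v hv => hv, ⊥, fun v hv => absurd hv (Set.notMem_empty v), ?_⟩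
    ext w
    simp only [SimpleGraph.Subgraph.verts_bot, Set.mem_empty_iff_false, flipSet,
      Set.mem_setOf_eq, false_iff]
    rintro ⟨h1, h2⟩; rw [h1] at h2; exact Species.noConfusion h2
  | @tail X T hIX hstep ih =>
    obtain ⟨hpres, M, hM, hverts⟩ := ih
    obtain ⟨u, v, r, hr, hadj, hu, hv, hT⟩ := hstep
    rw [Set.mem_singleton_iff] at hr
    subst hr
    simp only at hu hv hT
    have huv : u ≠ v := hadj.ne
    have hTval : ∀ w, T w = Species.B ↔ (w = u ∨ w = v ∨ X w = Species.B) := by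
      intro w
      subst hT
      rcases eq_or_ne w v with rfl | hwv
      · simp
      · rcases eq_or_ne w u with rfl | hwu
        · simp [Function.update_of_ne huv]
        · simp [Function.update_of_ne hwv, Function.update_of_ne hwu, hwu, hwv]
    have hpres' : ∀ w, I w = Species.B → T w = Species.B :=
      fun w hw => (hTval w).mpr (Or.inr (Or.inr (hpres w hw)))
    have hIu : I u = Species.A := by
      rw [← species_ne_B]; intro hc
      have := hpres u hc; rw [hu] at this; exact Species.noConfusion this
    have hIv : I v = Species.A := by
      rw [← species_ne_B]; intro hc
      have := hpres v hc; rw [hv] at this; exact Species.noConfusion this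
    refine ⟨hpres', M ⊔ G.subgraphOfAdj hadj, ?_, ?_⟩
    · refine hM.sup (SimpleGraph.Subgraph.IsMatching.subgraphOfAdj hadj) ?_
      rw [hM.support_eq_verts, hverts]
      refine Set.disjoint_left.mpr fun a ha hb => ?_
      have hb' : a ∈ (G.subgraphOfAdj hadj).verts :=
        SimpleGraph.Subgraph.support_subset_verts _ hb
      simp only [SimpleGraph.subgraphOfAdj_verts, Set.mem_insert_iff,
        Set.mem_singleton_iff] at hb'
      have : X a = Species.B := ha.2
      rcases hb' with rfl | rfl
      · rw [hu] at this; exact Species.noConfusion this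
      · rw [hv] at this; exact Species.noConfusion this
    · rw [SimpleGraph.Subgraph.verts_sup, hverts, SimpleGraph.subgraphOfAdj_verts]
      ext w
      simp only [flipSet, Set.mem_union, Set.mem_setOf_eq, Set.mem_insert_iff,
        Set.mem_singleton_iff, hTval w]
      constructor
      · rintro (⟨h1, h2⟩ | (rfl | rfl))
        · exact ⟨h1, Or.inr (Or.inr h2)⟩
        · exact ⟨hIu, Or.inl rfl⟩
        · exact ⟨hIv, Or.inr (Or.inl rfl)⟩
      · rintro ⟨h1, (rfl | rfl | h2)⟩
        · exact Or.inr (Or.inl rfl)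
        · exact Or.inr (Or.inr rfl)
        · exact Or.inl ⟨h1, h2⟩

lemma key_bwd {V : Type*} [Fintype V] [DecidableEq V] (G : SimpleGraph V)
    (T : V → Species) :
    ∀ (n : ℕ) (I : V → Species), (∀ v, I v = Species.B → T v = Species.B) →
      (∃ M : G.Subgraph, M.IsMatching ∧ M.verts = flipSet I T) →
      (flipSet I T).ncard ≤ n →
      Reaches G {(Species.A, Species.A, Species.B, Species.B)} I T := by
  have empty_case : ∀ I : V → Species, (∀ v, I v = Species.B → T v = Species.B) →
      flipSet I T = ∅ → Reaches G {(Species.A, Species.A, Species.B, Species.B)} I T := by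
    intro I hpres hemp
    have : T = I := by
      funext w
      rcases (by cases I w <;> simp : I w = Species.A ∨ I w = Species.B) with hw | hw
      · rw [hw, ← species_ne_B]
        intro hc
        exact (Set.eq_empty_iff_forall_notMem.mp hemp w) ⟨hw, hc⟩
      · rw [hw]; exact hpres w hw
    rw [this]
    exact Relation.ReflTransGen.refl
  intro n
  induction n with
  | zero =>
    intro I hpres hM hcard
    refine empty_case I hpres ?_
    rw [← Set.ncard_eq_zero (Set.toFinite _)]
    omega
  | succ n ih =>
    intro I hpres ⟨M, hM, hverts⟩ hcard
    rcases Set.eq_empty_or_nonempty (flipSet I T) with hemp | ⟨u, hu⟩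
    · exact empty_case I hpres hemp
    · have huM : u ∈ M.verts := hverts ▸ hu
      obtain ⟨v, hadj, huniq⟩ := hM huM
      have hvM : v ∈ M.verts := M.edge_vert hadj.symm
      have hv : v ∈ flipSet I T := hverts ▸ hvM
      have hGadj : G.Adj u v := M.adj_sub hadj
      have huv : u ≠ v := hGadj.ne
      set I' := Function.update (Function.update I u Species.B) v Species.B with hI'
      have hI'val : ∀ w, I' w = if w = v then Species.B else if w = u then Species.B else I w := by
        intro w
        rcases eq_or_ne w v with rfl | hwv
        · simp [hI']
        · rcases eq_or_ne w u with rfl | hwu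
          · simp [hI', Function.update_of_ne huv]
          · simp [hI', Function.update_of_ne hwv, Function.update_of_ne hwu, hwv, hwu]
      have hstep : Step G {(Species.A, Species.A, Species.B, Species.B)} I I' :=
        ⟨u, v, _, rfl, hGadj, hu.1, hv.1, rfl⟩
      have hflip' : flipSet I' T = flipSet I T \ {u, v} := by
        ext w
        simp only [flipSet, Set.mem_setOf_eq, Set.mem_diff, Set.mem_insert_iff,
          Set.mem_singleton_iff, hI'val w]
        rcases eq_or_ne w v with rfl | hwv
        · simp
        · rcases eq_or_ne w u with rfl | hwu
          · simp [hwv]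
          · simp [hwv, hwu]
      have hsub : ({u, v} : Set V) ⊆ flipSet I T := by
        rintro w (rfl | rfl)
        · exact hu
        · exact hv
      refine Relation.ReflTransGen.head hstep (ih I' ?_ ?_ ?_)
      · intro w hw
        rw [hI'val w] at hw
        split_ifs at hw with h1 h2
        · exact h1 ▸ hv.2
        · exact h2 ▸ hu.2
        · exact hpres w hw
      · refine ⟨M.deleteVerts {u, v}, ?_, ?_⟩
        · intro w hw
          rw [SimpleGraph.Subgraph.deleteVerts_verts] at hw
          obtain ⟨b, hb, hbu⟩ := hM hw.1
          have hbnotuv : b ∉ ({u, v} : Set V) := by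
            rintro (rfl | rfl)
            · exact hw.2 (Or.inr (huniq w hb.symm))
            · obtain ⟨v2, hv2, hv2u⟩ := hM hvM
              have h1 : w = v2 := hv2u w hb.symm
              have h2 : u = v2 := hv2u u hadj.symm
              exact hw.2 (Or.inl (h1.trans h2.symm))
          refine ⟨b, ?_, ?_⟩
          · exact SimpleGraph.Subgraph.deleteVerts_adj.mpr
              ⟨hw.1, hw.2, M.edge_vert hb.symm, hbnotuv, hb⟩
          · intro y hy
            exact hbu y (SimpleGraph.Subgraph.deleteVerts_adj.mp hy).2.2.2.2
        · rw [SimpleGraph.Subgraph.deleteVerts_verts, hverts, hflip']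
      · have h2 : ({u, v} : Set V).ncard = 2 := Set.ncard_pair huv
        have h3 : (flipSet I T \ {u, v}).ncard = (flipSet I T).ncard - 2 := by
          rw [Set.ncard_diff hsub (Set.toFinite _), h2]
        rw [hflip', h3]
        omega

lemma matching_equiv {V : Type*} (G : SimpleGraph V) (s : Set V) :
    (∃ M : (G.induce s).Subgraph, M.IsPerfectMatching) ↔
      (∃ M : G.Subgraph, M.IsMatching ∧ M.verts = s) := by
  constructor
  · rintro ⟨M, hM, hsp⟩
    refine ⟨{ verts := s
              Adj := fun a b => ∃ (ha : a ∈ s) (hb : b ∈ s), M.Adj ⟨a, ha⟩ ⟨b, hb⟩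
              adj_sub := by rintro a b ⟨ha, hb, h⟩; exact M.adj_sub h
              edge_vert := by rintro a b ⟨ha, hb, h⟩; exact ha
              symm := ⟨by rintro a b ⟨ha, hb, h⟩; exact ⟨hb, ha, h.symm⟩⟩ }, ?_, rfl⟩
    intro a ha
    obtain ⟨b, hb, hbu⟩ := hM (hsp ⟨a, ha⟩)
    refine ⟨b.val, ⟨ha, b.2, by simpa using hb⟩, ?_⟩
    rintro y ⟨hy1, hy2, hy3⟩
    have := hbu ⟨y, hy2⟩ (by simpa using hy3)
    exact congrArg Subtype.val this
  · rintro ⟨N, hN, hverts⟩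
    refine ⟨{ verts := Set.univ
              Adj := fun a b => N.Adj a.val b.val
              adj_sub := fun h => N.adj_sub h
              edge_vert := fun _ => Set.mem_univ _
              symm := ⟨fun a b h => N.adj_symm h⟩ }, ?_, fun a => Set.mem_univ a⟩
    rintro ⟨a, ha⟩ _
    obtain ⟨b, hb, hbu⟩ := hN (hverts ▸ ha : a ∈ N.verts)
    have hbs : b ∈ s := hverts ▸ N.edge_vert hb.symm
    exact ⟨⟨b, hbs⟩, hb, fun y hy => Subtype.ext (hbu y.val hy)⟩


/-- With species `{A, B}` and the single rule `A + A → B + B`, `T` is reachable from `I`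
iff every `B`-cell of `I` is a `B`-cell of `T` and the induced subgraph on the flip
cells has a perfect matching. -/
theorem stmt1 {V : Type*} [Fintype V] [DecidableEq V] (G : SimpleGraph V)
    (I T : V → Species) :
    Reaches G {(Species.A, Species.A, Species.B, Species.B)} I T ↔
      (∀ v, I v = Species.B → T v = Species.B) ∧
      ∃ M : (G.induce {v | I v = Species.A ∧ T v = Species.B}).Subgraph,
        M.IsPerfectMatching := by
  constructor
  · intro h
    obtain ⟨h1, h2⟩ := key_fwd G I T h
    exact ⟨h1, (matching_equiv G _).mpr h2⟩
  · rintro ⟨h1, h2⟩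
    exact key_bwd G T (flipSet I T).ncard I h1 ((matching_equiv G _).mp h2) le_rfl
end

section
/- Let G be a finite graph, let the species set be {A, B}, and let the only reaction rule be A + A → A + B. Call a cell v a flip cell if I(v) = A and T(v) = B, and a catalyst cell if I(v) = A and T(v) = A. Then a configuration T is reachable from a configuration I if and only if (1) every cell holding B in I also holds B in T, and (2) every flip cell v admits a path in G from v to some catalyst cell all of whose vertices w satisfy I(w) = A. -/
namespace Stmt2Aux

open SimpleGraph Species

/-- Invariant: every `B`-cell of `J` is a `B` cell of `T` and every flip cell of `J`
has an all-`A` walk to a catalyst. -/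
def SCond {V : Type*} (G : SimpleGraph V) (T J : V → Species) : Prop :=
  (∀ v, J v = Species.B → T v = Species.B) ∧
  ∀ v, J v = Species.A → T v = Species.B →
    ∃ (c : V) (p : G.Walk v c), J c = Species.A ∧ T c = Species.A ∧
      ∀ w ∈ p.support, J w = Species.A

lemma species_cases (s : Species) : s = Species.A ∨ s = Species.B := by cases s <;> simp

lemma AneB : Species.A ≠ Species.B := by simp

variable {V : Type*} [DecidableEq V] {G : SimpleGraph V} {T : V → Species}

lemma cond_of_reaches {J : V → Species}
    (h : Reaches G {(Species.A, Species.A, Species.A, Species.B)} J T) : SCond G T J := by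
  induction h using Relation.ReflTransGen.head_induction_on with
  | refl =>
    exact ⟨fun v hv => hv, fun v hA hB => absurd (hA.symm.trans hB) AneB⟩
  | head hstep _ ih =>
    rename_i J M _
    obtain ⟨u, v, r, hr, huv, hJu, hJv, hM⟩ := hstep
    rw [Set.mem_singleton_iff] at hr
    subst hr
    simp only at hJu hJv hM
    have hself : Function.update J u Species.A = J := by
      rw [← hJu]; exact Function.update_eq_self u J
    have hM' : M = Function.update J v Species.B := by rw [hM, hself]
    have hMA : ∀ w, M w = Species.A → J w = Species.A ∧ w ≠ v := by
      intro w hw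
      rcases eq_or_ne w v with rfl | hne
      · rw [hM', Function.update_self] at hw; exact absurd hw.symm AneB
      · rw [hM', Function.update_of_ne hne] at hw; exact ⟨hw, hne⟩
    constructor
    · intro w hw
      have hne : w ≠ v := fun e => AneB (hJv.symm.trans (e ▸ hw))
      have : M w = Species.B := by rw [hM', Function.update_of_ne hne]; exact hw
      exact ih.1 w this
    · intro w hwA hwB
      rcases eq_or_ne w v with rfl | hne
      · -- flipped cell is v; use neighbor u
        rcases species_cases (T u) with hTu | hTu
        · refine ⟨u, SimpleGraph.Walk.cons huv.symm SimpleGraph.Walk.nil, hJu, hTu, ?_⟩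
          intro x hx
          simp only [SimpleGraph.Walk.support_cons, SimpleGraph.Walk.support_nil,
            List.mem_cons, List.mem_singleton] at hx
          rcases hx with rfl | rfl | hx
          · exact hwA
          · exact hJu
          · simp at hx
        · have hMu : M u = Species.A := by
            rw [hM', Function.update_of_ne (G.ne_of_adj huv)]; exact hJu
          obtain ⟨c, q, hMc, hTc, hq⟩ := ih.2 u hMu hTu
          refine ⟨c, SimpleGraph.Walk.cons huv.symm q, (hMA c hMc).1, hTc, ?_⟩
          intro x hx
          simp only [SimpleGraph.Walk.support_cons, List.mem_cons] at hx
          rcases hx with rfl | hx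
          · exact hwA
          · exact (hMA x (hq x hx)).1
      · have hMw : M w = Species.A := by
          rw [hM', Function.update_of_ne hne]; exact hwA
        obtain ⟨c, q, hMc, hTc, hq⟩ := ih.2 w hMw hwB
        exact ⟨c, q, (hMA c hMc).1, hTc, fun x hx => (hMA x (hq x hx)).1⟩

variable [Fintype V]

/-- The set of flip cells of `J`. -/
def flips (T J : V → Species) : Finset V :=
  Finset.univ.filter (fun v => J v = Species.A ∧ T v = Species.B)

lemma reaches_of_cond :
    ∀ (n : ℕ) (J : V → Species), SCond G T J → (flips T J).card ≤ n →
      Reaches G {(Species.A, Species.A, Species.A, Species.B)} J T := by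
  intro n
  induction n with
  | zero =>
    intro J hc hcard
    have hempty : flips T J = ∅ := Finset.card_eq_zero.mp (Nat.le_zero.mp hcard)
    have hJT : J = T := by
      funext v
      rcases species_cases (J v) with hv | hv
      · rcases species_cases (T v) with hv' | hv'
        · rw [hv, hv']
        · have hm : v ∈ flips T J :=
            Finset.mem_filter.mpr ⟨Finset.mem_univ v, hv, hv'⟩
          rw [hempty] at hm
          exact absurd hm (Finset.notMem_empty v)
      · rw [hv, hc.1 v hv]
    rw [hJT]
    exact Relation.ReflTransGen.refl
  | succ n ih =>
    intro J hc hcard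
    rcases Finset.eq_empty_or_nonempty (flips T J) with hempty | hne
    · exact ih J hc (by rw [hempty]; simp)
    -- pick a flip cell x maximizing the distance to a catalyst
    set D : V → Set ℕ := fun w => {m | ∃ (c : V) (p : G.Walk w c), p.length = m ∧
      J c = Species.A ∧ T c = Species.A ∧ ∀ x ∈ p.support, J x = Species.A} with hD
    have hDne : ∀ w ∈ flips T J, (D w).Nonempty := by
      intro w hw
      rw [flips, Finset.mem_filter] at hw
      obtain ⟨c, p, h1, h2, h3⟩ := hc.2 w hw.2.1 hw.2.2
      exact ⟨p.length, c, p, rfl, h1, h2, h3⟩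
    obtain ⟨x, hxmem, hxmax⟩ :=
      Finset.exists_max_image (flips T J) (fun w => sInf (D w)) hne
    have hxf := Finset.mem_filter.mp hxmem
    have hJx : J x = Species.A := hxf.2.1
    have hTx : T x = Species.B := hxf.2.2
    obtain ⟨c, p, hplen, hJc, hTc, hpsup⟩ := Nat.sInf_mem (hDne x hxmem)
    -- p is not nil since T x = B ≠ A = T c
    cases p with
    | nil => exact absurd (hTc.symm.trans hTx) AneB
    | cons hadj q =>
      rename_i y
      have hJy : J y = Species.A := hpsup y (by
        simp only [SimpleGraph.Walk.support_cons, List.mem_cons]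
        exact Or.inr q.start_mem_support)
      set J' : V → Species := Function.update J x Species.B with hJ'
      have hJ'A : ∀ w, J' w = Species.A → J w = Species.A ∧ w ≠ x := by
        intro w hw
        rcases eq_or_ne w x with rfl | hwx
        · rw [hJ', Function.update_self] at hw; exact absurd hw.symm AneB
        · rw [hJ', Function.update_of_ne hwx] at hw; exact ⟨hw, hwx⟩
      have hstep : Step G {(Species.A, Species.A, Species.A, Species.B)} J J' := by
        refine ⟨y, x, (Species.A, Species.A, Species.A, Species.B), rfl, hadj.symm,
          hJy, hJx, ?_⟩
        have : Function.update J y Species.A = J := by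
          rw [← hJy]; exact Function.update_eq_self y J
        rw [this]
      -- J' satisfies the invariant
      have hcond' : SCond G T J' := by
        constructor
        · intro v hv
          rcases eq_or_ne v x with rfl | hvx
          · exact hTx
          · rw [hJ', Function.update_of_ne hvx] at hv; exact hc.1 v hv
        · intro w hwA hwB
          obtain ⟨hJw, hwx⟩ := hJ'A w hwA
          have hwflip : w ∈ flips T J := Finset.mem_filter.mpr ⟨Finset.mem_univ w, hJw, hwB⟩
          obtain ⟨c', q', hq'len, hJc', hTc', hq'sup⟩ := Nat.sInf_mem (hDne w hwflip)
          have hxnot : x ∉ q'.support := by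
            intro hxin
            have hq2 : sInf (D x) ≤ (q'.dropUntil x hxin).length := by
              apply Nat.sInf_le
              exact ⟨c', q'.dropUntil x hxin, rfl, hJc', hTc',
                fun z hz => hq'sup z (q'.support_dropUntil_subset hxin hz)⟩
            have hsplit : (q'.takeUntil x hxin).length + (q'.dropUntil x hxin).length
                = q'.length := by
              rw [← SimpleGraph.Walk.length_append, SimpleGraph.Walk.take_spec]
            have hle : sInf (D w) ≤ sInf (D x) := hxmax w hwflip
            have h0 : (q'.takeUntil x hxin).length = 0 := by omega
            exact hwx (SimpleGraph.Walk.eq_of_length_eq_zero h0)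
          have hsupne : ∀ z ∈ q'.support, z ≠ x := fun z hz he => hxnot (he ▸ hz)
          refine ⟨c', q', ?_, hTc', ?_⟩
          · rw [hJ', Function.update_of_ne (hsupne c' q'.end_mem_support)]; exact hJc'
          · intro z hz
            rw [hJ', Function.update_of_ne (hsupne z hz)]; exact hq'sup z hz
      -- the flip set shrinks
      have hsub : flips T J' ⊆ (flips T J).erase x := by
        intro v hv
        have hvf := Finset.mem_filter.mp hv
        obtain ⟨hJv, hvx⟩ := hJ'A v hvf.2.1
        exact Finset.mem_erase.mpr ⟨hvx, Finset.mem_filter.mpr ⟨Finset.mem_univ v, hJv, hvf.2.2⟩⟩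
      have hcard' : (flips T J').card ≤ n := by
        have h1 : (flips T J').card ≤ ((flips T J).erase x).card := Finset.card_le_card hsub
        have h2 : ((flips T J).erase x).card = (flips T J).card - 1 :=
          Finset.card_erase_of_mem hxmem
        have h3 : 1 ≤ (flips T J).card := Finset.card_pos.mpr hne
        omega
      exact Relation.ReflTransGen.head hstep (ih J' hcond' hcard')

end Stmt2Aux

/-- With species `{A, B}` and the single rule `A + A → A + B`, `T` is reachable from `I`
iff every `B`-cell of `I` is a `B`-cell of `T` and every flip cell admits a path in `G`
to some catalyst cell all of whose vertices hold `A` in `I`. -/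
theorem stmt2 {V : Type*} [Fintype V] [DecidableEq V] (G : SimpleGraph V)
    (I T : V → Species) :
    Reaches G {(Species.A, Species.A, Species.A, Species.B)} I T ↔
      (∀ v, I v = Species.B → T v = Species.B) ∧
      (∀ v, I v = Species.A → T v = Species.B →
        ∃ (c : V) (p : G.Walk v c), I c = Species.A ∧ T c = Species.A ∧
          p.IsPath ∧ ∀ w ∈ p.support, I w = Species.A) := by
  constructor
  · intro h
    have hc := Stmt2Aux.cond_of_reaches h
    refine ⟨hc.1, fun v hA hB => ?_⟩
    obtain ⟨c, p, h1, h2, h3⟩ := hc.2 v hA hB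
    exact ⟨c, p.bypass, h1, h2, p.bypass_isPath,
      fun w hw => h3 w (p.support_bypass_subset hw)⟩
  · intro h
    refine Stmt2Aux.reaches_of_cond (Stmt2Aux.flips T I).card I ⟨h.1, ?_⟩ le_rfl
    intro v hA hB
    obtain ⟨c, p, h1, h2, _, h4⟩ := h.2 v hA hB
    exact ⟨c, p, h1, h2, h4⟩
end
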